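/- arXiv:2412.13449 — 2 statements merged into one kernel-verified Lean document; each statement's English description precedes it below -/
import Mathlib

section
/- Let E, E₁, E₂ be Brauer G-sets with E₁ connected, and let f₁ : E₁ → E and f₂ : E₂ → E be coverings of Brauer G-sets. For e_i ∈ E_i (i = 1, 2) with f₁(e₁) = f₂(e₂), there exists a covering φ : E₁ → E₂ of Brauer G-sets with f₁ = f₂ ∘ φ and φ(e₁) = e₂ if and only if f₁*(Π_m(E₁, e₁)) ⊆ f₂*(Π_m(E₂, e₂)). Moreover, if such φ exists, it is unique. -/
namespace FB

/-- The data of a Brauer `G`-set for `G = ⟨g⟩` infinite cyclic: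
a `ℤ`-set `E` (where `act n` is the action of `g^n`), a subset `U`,
an involution `tau` on `U` (encoded as a total map, junk outside `U`),
and a degree function `d`. -/
structure BrauerData where
  E : Type
  act : ℤ → E → E
  U : Set E
  tau : E → E
  d : E → ℕ

namespace BrauerData

/-- The Nakayama automorphism `σ(e) = g^(d e) · e`. -/
def sigma (B : BrauerData) (e : B.E) : B.E := B.act (B.d e) e

/-- The axioms making the data a Brauer `G`-set. -/
structure IsBrauer (B : BrauerData) : Prop where
  act_zero : ∀ e, B.act 0 e = e
  act_add : ∀ (m n : ℤ) (e : B.E), B.act (m + n) e = B.act m (B.act n e)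
  dpos : ∀ e, 0 < B.d e
  d_act : ∀ (n : ℤ) (e : B.E), B.d (B.act n e) = B.d e
  tau_mem : ∀ e ∈ B.U, B.tau e ∈ B.U
  tau_invol : ∀ e ∈ B.U, B.tau (B.tau e) = e
  sigma_mem : ∀ e, e ∈ B.U ↔ B.sigma e ∈ B.U
  tau_sigma : ∀ e ∈ B.U, B.tau (B.sigma e) = B.sigma (B.tau e)

end BrauerData

/-- The letters of walks: `g`, `g⁻¹`, `τ`. -/
inductive Step : Type
  | g : Step
  | ginv : Step
  | tau : Step
  deriving DecidableEq

namespace BrauerData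

/-- Apply one step. -/
def stepFun (B : BrauerData) : Step → B.E → B.E
  | Step.g, e => B.act 1 e
  | Step.ginv, e => B.act (-1) e
  | Step.tau, e => B.tau e

/-- Terminal of the walk starting at `e` with steps `l` (listed in order of application). -/
def endpt (B : BrauerData) : B.E → List Step → B.E
  | e, [] => e
  | e, s :: l => B.endpt (B.stepFun s e) l

/-- The condition for a list of steps from `e` to be a walk:
both endpoints of a `τ`-step must lie in `U`. -/
def IsValid (B : BrauerData) : B.E → List Step → Prop
  | _, [] => True
  | e, s :: l => (s = Step.tau → e ∈ B.U ∧ B.tau e ∈ B.U) ∧ B.IsValid (B.stepFun s e) l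

/-- A Brauer `G`-set is connected if any two half-edges are joined by a walk. -/
def Connected (B : BrauerData) : Prop :=
  ∀ x y : B.E, ∃ l : List Step, B.IsValid x l ∧ B.endpt x l = y

/-- A closed walk at `e`. -/
def Closed (B : BrauerData) (e : B.E) (l : List Step) : Prop :=
  B.IsValid e l ∧ B.endpt e l = e

theorem endpt_append (B : BrauerData) (e : B.E) (l₁ l₂ : List Step) :
    B.endpt e (l₁ ++ l₂) = B.endpt (B.endpt e l₁) l₂ := by
  induction l₁ generalizing e with
  | nil => rfl
  | cons s l ih => simpa [endpt] using ih (B.stepFun s e)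

theorem isValid_append (B : BrauerData) (e : B.E) (l₁ l₂ : List Step) :
    B.IsValid e (l₁ ++ l₂) ↔ B.IsValid e l₁ ∧ B.IsValid (B.endpt e l₁) l₂ := by
  induction l₁ generalizing e with
  | nil => simp [IsValid, endpt]
  | cons s l ih =>
    simp only [List.cons_append, IsValid, endpt, List.append_eq, ih]
    tauto

end BrauerData

/-- The walk `g^n` (as a list of steps). -/
def gSteps (n : ℤ) : List Step :=
  if 0 ≤ n then List.replicate n.toNat Step.g else List.replicate (-n).toNat Step.ginv

/-- The homotopy relation `≈` on walks of a Brauer `G`-set, relative to a common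
source `e`.  It is the equivalence relation generated by (mh1), (mh2), (mh3). -/
inductive Htp (B : BrauerData) : B.E → List Step → List Step → Prop
  | refl (e : B.E) (l : List Step) (h : B.IsValid e l) : Htp B e l l
  | symm {e : B.E} {l₁ l₂ : List Step} : Htp B e l₁ l₂ → Htp B e l₂ l₁
  | trans {e : B.E} {l₁ l₂ l₃ : List Step} :
      Htp B e l₁ l₂ → Htp B e l₂ l₃ → Htp B e l₁ l₃
  | gginv (e : B.E) : Htp B e [Step.g, Step.ginv] []
  | ginvg (e : B.E) : Htp B e [Step.ginv, Step.g] []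
  | tautau (e : B.E) (h : e ∈ B.U) : Htp B e [Step.tau, Step.tau] []
  | square (e : B.E) (h : e ∈ B.U) :
      Htp B e (List.replicate (B.d e) Step.g ++ [Step.tau])
              (Step.tau :: List.replicate (B.d (B.tau e)) Step.g)
  | post {e : B.E} {l₁ l₂ : List Step} (u : List Step) (h : Htp B e l₁ l₂)
      (hu : B.IsValid (B.endpt e l₁) u) : Htp B e (l₁ ++ u) (l₂ ++ u)
  | pre {l₁ l₂ : List Step} (e : B.E) (v : List Step) (hv : B.IsValid e v)
      (h : Htp B (B.endpt e v) l₁ l₂) : Htp B e (v ++ l₁) (v ++ l₂)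

/-- Morphisms of Brauer `G`-sets. -/
def IsMorphism (B B' : BrauerData) (f : B.E → B'.E) : Prop :=
  (∀ (n : ℤ) (e : B.E), f (B.act n e) = B'.act n (f e)) ∧
  (∀ e ∈ B.U, f e ∈ B'.U) ∧
  (∀ e ∈ B.U, f (B.tau e) = B'.tau (f e)) ∧
  (∀ e, B'.d (f e) = B.d e)

/-- Coverings of Brauer `G`-sets. -/
def IsCovering (B B' : BrauerData) (f : B.E → B'.E) : Prop :=
  (∀ (n : ℤ) (e : B.E), f (B.act n e) = B'.act n (f e)) ∧
  (∀ e, e ∈ B.U ↔ f e ∈ B'.U) ∧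
  (∀ e ∈ B.U, f (B.tau e) = B'.tau (f e)) ∧
  (∀ e, B'.d (f e) = B.d e)

/-- Isomorphisms of Brauer `G`-sets: invertible morphisms whose inverse is a morphism. -/
def IsIsoBrauer (B B' : BrauerData) : Prop :=
  ∃ (f : B.E → B'.E) (h : B'.E → B.E), IsMorphism B B' f ∧ IsMorphism B' B h ∧
    (∀ x, h (f x) = x) ∧ (∀ y, f (h y) = y)

/-- Closed walks at a basepoint. -/
def ClosedWalk (B : BrauerData) (e : B.E) : Type := {l : List Step // B.Closed e l}

/-- Composition (concatenation) of closed walks. -/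
def ClosedWalk.comp {B : BrauerData} {e : B.E} (w v : ClosedWalk B e) :
    ClosedWalk B e :=
  ⟨w.1 ++ v.1, by
    obtain ⟨hw1, hw2⟩ := w.2
    obtain ⟨hv1, hv2⟩ := v.2
    refine ⟨?_, ?_⟩
    · rw [B.isValid_append]
      exact ⟨hw1, by rw [hw2]; exact hv1⟩
    · rw [B.endpt_append, hw2, hv2]⟩

/-- The fundamental group `Π_m(E, e)` of a Brauer `G`-set: homotopy classes of
closed walks at `e` (as a set; the group structure is given by `ClosedWalk.comp`). -/
def Pi1 (B : BrauerData) (e : B.E) : Type :=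
  Quot (fun w v : ClosedWalk B e => Htp B e w.1 v.1)

/-- Walks from `x` to `y`. -/
def Walks (B : BrauerData) (x y : B.E) : Type :=
  {l : List Step // B.IsValid x l ∧ B.endpt x l = y}

/-- Composition (concatenation) of walks. -/
def Walks.comp {B : BrauerData} {x y z : B.E} (u : Walks B x y) (v : Walks B y z) :
    Walks B x z :=
  ⟨u.1 ++ v.1, by
    obtain ⟨hu1, hu2⟩ := u.2
    obtain ⟨hv1, hv2⟩ := v.2
    refine ⟨?_, ?_⟩
    · rw [B.isValid_append]
      exact ⟨hu1, by rw [hu2]; exact hv1⟩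
    · rw [B.endpt_append, hu2, hv2]⟩

/-- Hom-sets of the fundamental groupoid `Π_m(E, A)`: homotopy classes of walks
from `x` to `y`. -/
def WalkCls (B : BrauerData) (x y : B.E) : Type :=
  Quot (fun u v : Walks B x y => Htp B x u.1 v.1)

/-- Composition in the fundamental groupoid. -/
def WalkCls.comp {B : BrauerData} {x y z : B.E} :
    WalkCls B x y → WalkCls B y z → WalkCls B x z := by
  refine Quot.lift (fun u => Quot.lift
      (fun v : Walks B y z => Quot.mk _ (u.comp v)) ?_) ?_
  · intro v₁ v₂ hv
    apply Quot.sound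
    show Htp B x (u.1 ++ v₁.1) (u.1 ++ v₂.1)
    refine Htp.pre x u.1 u.2.1 ?_
    rw [u.2.2]
    exact hv
  · intro u₁ u₂ hu
    funext v
    induction v using Quot.ind with
    | _ v =>
      show Quot.mk _ (u₁.comp v) = Quot.mk _ (u₂.comp v)
      apply Quot.sound
      show Htp B x (u₁.1 ++ v.1) (u₂.1 ++ v.1)
      refine Htp.post v.1 hu ?_
      rw [u₁.2.2]
      exact v.2.1

/-- `r` is the order of the Nakayama automorphism. -/
def IsOrderOf (B : BrauerData) (r : ℕ) : Prop :=
  0 < r ∧ (∀ x, B.sigma^[r] x = x) ∧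
    ∀ j : ℕ, 0 < j → (∀ x, B.sigma^[j] x = x) → r ≤ j

/-- The reduced homotopy relation `≈'` (relative to the order `r` of the Nakayama
automorphism): `w ≈' v` iff `w ≈ (t w | g^(k·r·d(t w)) | t v) v` for some `k : ℤ`. -/
def RedHtp (B : BrauerData) (r : ℕ) (e : B.E) (l₁ l₂ : List Step) : Prop :=
  ∃ k : ℤ, Htp B e l₁ (l₂ ++ gSteps (k * (r : ℤ) * (B.d (B.endpt e l₁) : ℤ)))

/-- One step of the `⟨σ⟩`-orbit relation. -/
def sigmaRel (B : BrauerData) (x y : B.E) : Prop := B.sigma x = y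

/-- One step of the `G`-orbit (vertex) relation. -/
def vertexRel (B : BrauerData) (x y : B.E) : Prop := B.act 1 x = y

/-- Vertices of a Brauer `G`-set: the `G`-orbits. -/
def VertexQuot (B : BrauerData) : Type := Quot (vertexRel B)

/-- Edges of a Brauer `G`-set: pairs `{e, τ e}` with `e ∈ U`, `τ e ≠ e`. -/
def EdgeQuot (B : BrauerData) : Type :=
  Quot (fun a b : {e : B.E // e ∈ B.U ∧ B.tau e ≠ e} => B.tau a.1 = b.1)

/-- Every vertex is finite and has integral f-degree. -/
def IntegralFDegree (B : BrauerData) : Prop :=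
  ∀ e : B.E, ∃ m : ℕ, 0 < m ∧ B.act m e = e ∧
    (∀ j : ℕ, 0 < j → B.act j e = e → m ≤ j) ∧ m ∣ B.d e

/-- The group `⟨σ⟩` is admissible: no `⟨σ⟩`-orbit contains both half-edges of an edge. -/
def SigmaAdmissible (B : BrauerData) : Prop :=
  ∀ e : B.E, ¬ Relation.EqvGen (sigmaRel B) e (B.tau e)

/-- The quotient `E/⟨σ⟩` of an `f_ms`-BG by the group generated by its
Nakayama automorphism. -/
def sigmaQuot (B : BrauerData) (hB : B.IsBrauer) (hU : B.U = Set.univ) : BrauerData where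
  E := Quot (sigmaRel B)
  act := fun n => Quot.lift (fun x => Quot.mk (sigmaRel B) (B.act n x))
    (fun x y hxy => by
      apply Quot.sound
      unfold sigmaRel at *
      subst hxy
      show B.sigma (B.act n x) = B.act n (B.sigma x)
      unfold BrauerData.sigma
      rw [hB.d_act, ← hB.act_add, ← hB.act_add, add_comm])
  U := Quot.mk (sigmaRel B) '' B.U
  tau := Quot.lift (fun x => Quot.mk (sigmaRel B) (B.tau x))
    (fun x y hxy => by
      apply Quot.sound
      unfold sigmaRel at *
      subst hxy
      show B.sigma (B.tau x) = B.tau (B.sigma x)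
      exact (hB.tau_sigma x (by rw [hU]; trivial)).symm)
  d := Quot.lift B.d
    (fun x y hxy => by
      unfold sigmaRel at hxy
      subst hxy
      show B.d x = B.d (B.sigma x)
      unfold BrauerData.sigma
      rw [hB.d_act])

open Classical in
/-- The quotient `E/Π` of a Brauer `G`-set by a group `Π` of automorphisms
(given by a group `Γ` acting by automorphisms via `ρ`). -/
noncomputable def quotData (B : BrauerData) (Γ : Type) [Group Γ]
    (ρ : Γ →* Equiv.Perm B.E) (hρ : ∀ γ : Γ, IsMorphism B B (ρ γ)) : BrauerData where
  E := Quot (fun x y : B.E => ∃ γ : Γ, ρ γ x = y)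
  act := fun n => Quot.lift (fun x => Quot.mk _ (B.act n x))
    (fun x y hxy => by
      obtain ⟨γ, hγ⟩ := hxy
      exact Quot.sound ⟨γ, by rw [(hρ γ).1 n x, hγ]⟩)
  U := Quot.mk _ '' B.U
  tau := Quot.lift
    (fun x => if x ∈ B.U then Quot.mk _ (B.tau x) else Quot.mk _ x)
    (fun x y hxy => by
      obtain ⟨γ, hγ⟩ := hxy
      by_cases hx : x ∈ B.U
      · have hy : y ∈ B.U := hγ ▸ (hρ γ).2.1 x hx
        rw [if_pos hx, if_pos hy]
        exact Quot.sound ⟨γ, by rw [(hρ γ).2.2.1 x hx, hγ]⟩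
      · have hy : y ∉ B.U := by
          intro hy
          apply hx
          have h1 : ρ γ⁻¹ y ∈ B.U := (hρ γ⁻¹).2.1 y hy
          have h2 : ρ γ⁻¹ y = x := by
            rw [← hγ, ← Equiv.Perm.mul_apply, ← map_mul, inv_mul_cancel, map_one,
              Equiv.Perm.one_apply]
          rwa [h2] at h1
        rw [if_neg hx, if_neg hy]
        exact Quot.sound ⟨γ, hγ⟩)
  d := Quot.lift B.d
    (fun x y hxy => by
      obtain ⟨γ, hγ⟩ := hxy
      rw [← hγ, (hρ γ).2.2.2 x])

open Classical in
/-- The double cover `Ê` of a Brauer `G`-set: two copies of `E`, with the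
involution exchanging the copies at the fixed points of `τ`. -/
noncomputable def hatData (B : BrauerData) : BrauerData where
  E := B.E × Bool
  act := fun n p => (B.act n p.1, p.2)
  U := {p | p.1 ∈ B.U}
  tau := fun p => if B.tau p.1 = p.1 then (p.1, !p.2) else (B.tau p.1, p.2)
  d := fun p => B.d p.1

section Restrict

variable (B : BrauerData) (hB : B.IsBrauer) (C : Set B.E)
  (hC : ∀ e : B.E, e ∈ C ↔ B.act (B.d e) e ∈ C)

open Classical in
/-- The first-return map forwards, on `E ∖ C`. -/
noncomputable def restrictFwd (x : {x : B.E // x ∉ C}) : {x : B.E // x ∉ C} :=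
  have hex : ∃ N : ℕ, 0 < N ∧ B.act N x.1 ∉ C :=
    ⟨B.d x.1, hB.dpos x.1, fun hc => x.2 ((hC x.1).mpr hc)⟩
  ⟨B.act (Nat.find hex) x.1, (Nat.find_spec hex).2⟩

open Classical in
/-- The first-return map backwards, on `E ∖ C`. -/
noncomputable def restrictBwd (x : {x : B.E // x ∉ C}) : {x : B.E // x ∉ C} :=
  have hex : ∃ N : ℕ, 0 < N ∧ B.act (-(N : ℤ)) x.1 ∉ C := by
    refine ⟨B.d x.1, hB.dpos x.1, fun hc => x.2 ?_⟩
    have h1 : B.act (B.d (B.act (-(B.d x.1 : ℤ)) x.1)) (B.act (-(B.d x.1 : ℤ)) x.1) ∈ C :=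
      (hC _).mp hc
    rw [hB.d_act, ← hB.act_add] at h1
    simpa [hB.act_zero] using h1
  ⟨B.act (-(Nat.find hex : ℤ)) x.1, (Nat.find_spec hex).2⟩

open Classical in
/-- The Brauer `G`-set structure on `E' = E ∖ C` (for `C ⊆ E ∖ U` stable under `σ`):
`g` acts by the first-return map, and the degree is corrected by the number of
deleted points passed. -/
noncomputable def restrictData (hCU : ∀ e ∈ C, e ∉ B.U) : BrauerData where
  E := {x : B.E // x ∉ C}
  act := fun n x =>
    if 0 ≤ n then (restrictFwd B hB C hC)^[n.toNat] x
    else (restrictBwd B hB C hC)^[(-n).toNat] x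
  U := {x | x.1 ∈ B.U}
  tau := fun x =>
    if h : x.1 ∈ B.U then ⟨B.tau x.1, fun hc => hCU _ hc (hB.tau_mem _ h)⟩ else x
  d := fun x => B.d x.1 - ((Finset.Ico 1 (B.d x.1)).filter fun i => B.act i x.1 ∈ C).card

end Restrict

section Lines

/-- The data of a doubly infinite walk. -/
structure Line (B : BrauerData) where
  pt : ℤ → B.E
  st : ℤ → Step

/-- The line condition: `pt i = (st i) (pt (i-1))`, and both endpoints of a
`τ`-step lie in `U`. -/
def Line.IsLine {B : BrauerData} (l : Line B) : Prop :=
  ∀ i : ℤ, (l.st i = Step.tau → l.pt (i - 1) ∈ B.U ∧ l.pt i ∈ B.U) ∧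
    l.pt i = B.stepFun (l.st i) (l.pt (i - 1))

/-- The `n`-th translate of a line. -/
def Line.translate {B : BrauerData} (l : Line B) (n : ℤ) : Line B :=
  ⟨fun i => l.pt (i + n), fun i => l.st (i + n)⟩

/-- The inverse of a step. -/
def Step.inv : Step → Step
  | Step.g => Step.ginv
  | Step.ginv => Step.g
  | Step.tau => Step.tau

/-- The inverse of a line. -/
def Line.inv {B : BrauerData} (l : Line B) : Line B :=
  ⟨fun i => l.pt (-i), fun i => (l.st (1 - i)).inv⟩

/-- A band: a periodic line of the alternating form
`⋯ τ g^{k_i} τ g^{-l_i} τ g^{k_{i+1}} ⋯` with `0 < k_i < d(e_i)`, `0 < l_i < d(h_i)`. -/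
def Line.IsBand {B : BrauerData} (l : Line B) : Prop :=
  l.IsLine ∧
  (∃ n : ℤ, 0 < n ∧ l.translate n = l) ∧
  (∃ i : ℤ, l.st i = Step.tau) ∧
  (∀ i : ℤ, l.st i = Step.tau → l.st (i + 1) ≠ Step.tau) ∧
  (∀ i : ℤ, l.st i = Step.g → l.st (i + 1) = Step.g ∨ l.st (i + 1) = Step.tau) ∧
  (∀ i : ℤ, l.st i = Step.ginv → l.st (i + 1) = Step.ginv ∨ l.st (i + 1) = Step.tau) ∧
  (∀ i : ℤ, l.st i = Step.g → l.st (i + 1) = Step.tau → l.st (i + 2) = Step.ginv) ∧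
  (∀ i : ℤ, l.st i = Step.ginv → l.st (i + 1) = Step.tau → l.st (i + 2) = Step.g) ∧
  (∀ (i : ℤ) (j : ℕ), l.st i = Step.tau → 0 < j →
    (∀ m : ℕ, 0 < m → m ≤ j → l.st (i + m) ≠ Step.tau) → j < B.d (l.pt i))

/-- One step of the equivalence relation on bands: translation or inversion. -/
def BandRel (B : BrauerData) (l₁ l₂ : Line B) : Prop :=
  (∃ n : ℤ, l₂ = l₁.translate n) ∨ l₂ = l₁.inv

/-- The set of equivalence classes of bands. -/
def BandClasses (B : BrauerData) : Type :=
  Quot (fun l₁ l₂ : {l : Line B // l.IsBand} => BandRel B l₁.1 l₂.1)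

end Lines

section Special

/-- Tail of a special walk: blocks `g^i` separated by single `τ`'s, with
`0 < i < d` for the inner blocks and `0 ≤ i < d` for the last block. -/
inductive SpecialTail (B : BrauerData) : B.E → List Step → Prop
  | last (e : B.E) (i : ℕ) (h : i < B.d e) :
      SpecialTail B e (List.replicate i Step.g)
  | cons (e : B.E) (i : ℕ) (h0 : 0 < i) (h : i < B.d e)
      (hU : B.act i e ∈ B.U) (hU' : B.tau (B.act i e) ∈ B.U) {l : List Step}
      (ht : SpecialTail B (B.tau (B.act i e)) l) :
      SpecialTail B e (List.replicate i Step.g ++ Step.tau :: l)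

/-- Special walks: `g^{i_k} τ g^{i_{k-1}} τ ⋯ τ g^{i_1} τ g^{i_0}` with
`0 ≤ i_0 < d(e_0)`, `0 ≤ i_k < d(e_k)` and `0 < i_l < d(e_l)` for `1 ≤ l ≤ k-1`. -/
inductive IsSpecial (B : BrauerData) : B.E → List Step → Prop
  | single (e : B.E) (i : ℕ) (h : i < B.d e) :
      IsSpecial B e (List.replicate i Step.g)
  | multi (e : B.E) (i : ℕ) (h : i < B.d e)
      (hU : B.act i e ∈ B.U) (hU' : B.tau (B.act i e) ∈ B.U) {l : List Step}
      (ht : SpecialTail B (B.tau (B.act i e)) l) :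
      IsSpecial B e (List.replicate i Step.g ++ Step.tau :: l)

end Special

end FB

namespace FB

/-! ### Auxiliary lemmas for the lifting criterion -/

theorem Step.inv_inv' (s : Step) : s.inv.inv = s := by cases s <;> rfl

/-- The inverse of a walk, as a list of steps. -/
def invList (l : List Step) : List Step := (l.map Step.inv).reverse

theorem invList_invList (l : List Step) : invList (invList l) = l := by
  simp [invList, List.map_reverse, List.map_map, Function.comp_def, Step.inv_inv']

theorem invList_cons (s : Step) (l : List Step) :
    invList (s :: l) = invList l ++ [s.inv] := by
  simp [invList]

theorem valid_replicate {B : BrauerData} {s : Step} (hs : s ≠ Step.tau) :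
    ∀ (n : ℕ) (x : B.E), B.IsValid x (List.replicate n s) := by
  intro n
  induction n with
  | zero => intro x; trivial
  | succ n ih =>
    intro x
    rw [List.replicate_succ]
    exact ⟨fun h => absurd h hs, ih (B.stepFun s x)⟩

theorem endpt_replicate_g {B : BrauerData} (hB : B.IsBrauer) :
    ∀ (n : ℕ) (x : B.E), B.endpt x (List.replicate n Step.g) = B.act n x := by
  intro n
  induction n with
  | zero => intro x; exact (hB.act_zero x).symm
  | succ n ih =>
    intro x
    rw [List.replicate_succ]
    show B.endpt (B.stepFun Step.g x) (List.replicate n Step.g) = _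
    rw [ih]
    show B.act n (B.act 1 x) = _
    have hc : (n : ℤ) + 1 = ((n + 1 : ℕ) : ℤ) := by push_cast; ring
    rw [← hB.act_add, hc]

theorem endpt_replicate_ginv {B : BrauerData} (hB : B.IsBrauer) :
    ∀ (n : ℕ) (x : B.E), B.endpt x (List.replicate n Step.ginv) = B.act (-(n : ℤ)) x := by
  intro n
  induction n with
  | zero => intro x; simpa [BrauerData.endpt] using (hB.act_zero x).symm
  | succ n ih =>
    intro x
    rw [List.replicate_succ]
    show B.endpt (B.stepFun Step.ginv x) (List.replicate n Step.ginv) = _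
    rw [ih]
    show B.act (-(n : ℤ)) (B.act (-1) x) = _
    have hc : -(n : ℤ) + -1 = -((n + 1 : ℕ) : ℤ) := by push_cast; ring
    rw [← hB.act_add, hc]

theorem gSteps_valid {B : BrauerData} (n : ℤ) (x : B.E) : B.IsValid x (gSteps n) := by
  unfold gSteps
  split
  · exact valid_replicate (by simp) _ x
  · exact valid_replicate (by simp) _ x

theorem endpt_gSteps {B : BrauerData} (hB : B.IsBrauer) (n : ℤ) (x : B.E) :
    B.endpt x (gSteps n) = B.act n x := by
  unfold gSteps
  split
  · rw [endpt_replicate_g hB]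
    congr 1
    omega
  · rw [endpt_replicate_ginv hB]
    congr 1
    omega

/-- Validity transfers along a covering (in both directions), and a covering
commutes with taking endpoints of valid walks. -/
theorem cov_valid {B B' : BrauerData} {f : B.E → B'.E} (hf : IsCovering B B' f) :
    ∀ (l : List Step) (x : B.E),
      (B.IsValid x l ↔ B'.IsValid (f x) l) ∧
      (B.IsValid x l → f (B.endpt x l) = B'.endpt (f x) l) := by
  intro l
  induction l with
  | nil => exact fun x => ⟨Iff.rfl, fun _ => rfl⟩
  | cons s l ih =>
    intro x
    have hmem : ∀ y : B.E, (y ∈ B.U ↔ f y ∈ B'.U) := hf.2.1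
    have hfirst : (s = Step.tau → x ∈ B.U ∧ B.tau x ∈ B.U) ↔
        (s = Step.tau → f x ∈ B'.U ∧ B'.tau (f x) ∈ B'.U) := by
      constructor
      · intro h hs
        obtain ⟨h1, h2⟩ := h hs
        exact ⟨(hmem x).mp h1, by rw [← hf.2.2.1 x h1]; exact (hmem _).mp h2⟩
      · intro h hs
        obtain ⟨h1, h2⟩ := h hs
        have hx := (hmem x).mpr h1
        refine ⟨hx, (hmem _).mpr ?_⟩
        rw [hf.2.2.1 x hx]
        exact h2
    have hstep : (s = Step.tau → x ∈ B.U) → f (B.stepFun s x) = B'.stepFun s (f x) := by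
      intro hτ
      cases s with
      | g => exact hf.1 1 x
      | ginv => exact hf.1 (-1) x
      | tau => exact hf.2.2.1 x (hτ rfl)
    constructor
    · show ((s = Step.tau → x ∈ B.U ∧ B.tau x ∈ B.U) ∧ B.IsValid (B.stepFun s x) l) ↔
        ((s = Step.tau → f x ∈ B'.U ∧ B'.tau (f x) ∈ B'.U) ∧
          B'.IsValid (B'.stepFun s (f x)) l)
      constructor
      · rintro ⟨h1, h2⟩
        refine ⟨hfirst.mp h1, ?_⟩
        rw [← hstep (fun hs => (h1 hs).1)]
        exact ((ih (B.stepFun s x)).1).mp h2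
      · rintro ⟨h1, h2⟩
        refine ⟨hfirst.mpr h1, ?_⟩
        apply ((ih (B.stepFun s x)).1).mpr
        rw [hstep (fun hs => ((hfirst.mpr h1) hs).1)]
        exact h2
    · rintro ⟨h1, h2⟩
      show f (B.endpt (B.stepFun s x) l) = B'.endpt (B'.stepFun s (f x)) l
      rw [← hstep (fun hs => (h1 hs).1)]
      exact (ih (B.stepFun s x)).2 h2

/-- The inverse of a valid walk is a valid walk, back to the source. -/
theorem inv_walk {B : BrauerData} (hB : B.IsBrauer) :
    ∀ (l : List Step) (x : B.E), B.IsValid x l →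
      B.IsValid (B.endpt x l) (invList l) ∧ B.endpt (B.endpt x l) (invList l) = x := by
  intro l
  induction l with
  | nil => intro x _; exact ⟨trivial, rfl⟩
  | cons s l ih =>
    intro x hv
    obtain ⟨h1, h2⟩ := hv
    have hIH := ih (B.stepFun s x) h2
    have hstep : (s.inv = Step.tau → B.stepFun s x ∈ B.U ∧ B.tau (B.stepFun s x) ∈ B.U) ∧
        B.stepFun s.inv (B.stepFun s x) = x := by
      cases s with
      | g =>
        refine ⟨fun h => by simp [Step.inv] at h, ?_⟩
        show B.act (-1) (B.act 1 x) = x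
        rw [← hB.act_add]
        norm_num [hB.act_zero]
      | ginv =>
        refine ⟨fun h => by simp [Step.inv] at h, ?_⟩
        show B.act 1 (B.act (-1) x) = x
        rw [← hB.act_add]
        norm_num [hB.act_zero]
      | tau =>
        obtain ⟨hxU, hτU⟩ := h1 rfl
        refine ⟨fun _ => ⟨hτU, ?_⟩, ?_⟩
        · show B.tau (B.tau x) ∈ B.U
          rw [hB.tau_invol x hxU]
          exact hxU
        · show B.tau (B.tau x) = x
          exact hB.tau_invol x hxU
    have hept : B.endpt x (s :: l) = B.endpt (B.stepFun s x) l := rfl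
    constructor
    · rw [invList_cons, hept, B.isValid_append]
      refine ⟨hIH.1, ?_⟩
      rw [hIH.2]
      exact ⟨hstep.1, trivial⟩
    · rw [invList_cons, hept, B.endpt_append, hIH.2]
      show B.endpt (B.stepFun s.inv (B.stepFun s x)) [] = x
      exact hstep.2

/-- A homotopy forces both walks to be valid, with equal endpoints. -/
theorem htp_facts {B : BrauerData} (hB : B.IsBrauer) {e : B.E} {l₁ l₂ : List Step}
    (h : Htp B e l₁ l₂) :
    B.IsValid e l₁ ∧ B.IsValid e l₂ ∧ B.endpt e l₁ = B.endpt e l₂ := by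
  induction h with
  | refl e l hv => exact ⟨hv, hv, rfl⟩
  | symm _ ih => exact ⟨ih.2.1, ih.1, ih.2.2.symm⟩
  | trans _ _ ih1 ih2 => exact ⟨ih1.1, ih2.2.1, ih1.2.2.trans ih2.2.2⟩
  | gginv e =>
    refine ⟨⟨fun h => by simp at h, fun h => by simp at h, trivial⟩, trivial, ?_⟩
    show B.act (-1) (B.act 1 e) = e
    rw [← hB.act_add]
    norm_num [hB.act_zero]
  | ginvg e =>
    refine ⟨⟨fun h => by simp at h, fun h => by simp at h, trivial⟩, trivial, ?_⟩
    show B.act 1 (B.act (-1) e) = e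
    rw [← hB.act_add]
    norm_num [hB.act_zero]
  | tautau e he =>
    have hτe : B.tau e ∈ B.U := hB.tau_mem e he
    refine ⟨⟨fun _ => ⟨he, hτe⟩, fun _ => ⟨hτe, ?_⟩, trivial⟩, trivial, ?_⟩
    · show B.tau (B.tau e) ∈ B.U
      rw [hB.tau_invol e he]
      exact he
    · show B.tau (B.tau e) = e
      exact hB.tau_invol e he
  | square e he =>
    have hσ : B.sigma e ∈ B.U := (hB.sigma_mem e).mp he
    have hτσ : B.tau (B.sigma e) ∈ B.U := hB.tau_mem _ hσ
    have hτe : B.tau e ∈ B.U := hB.tau_mem e he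
    have h1 : B.endpt e (List.replicate (B.d e) Step.g ++ [Step.tau]) =
        B.tau (B.sigma e) := by
      rw [B.endpt_append, endpt_replicate_g hB]
      rfl
    have h2 : B.endpt e (Step.tau :: List.replicate (B.d (B.tau e)) Step.g) =
        B.sigma (B.tau e) := by
      show B.endpt (B.tau e) (List.replicate (B.d (B.tau e)) Step.g) = _
      rw [endpt_replicate_g hB]
      rfl
    refine ⟨?_, ?_, ?_⟩
    · rw [B.isValid_append]
      refine ⟨valid_replicate (by simp) _ e, ?_⟩
      rw [endpt_replicate_g hB]
      exact ⟨fun _ => ⟨hσ, hτσ⟩, trivial⟩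
    · exact ⟨fun _ => ⟨he, hτe⟩, valid_replicate (by simp) _ (B.tau e)⟩
    · rw [h1, h2]
      exact hB.tau_sigma e he
  | post u h hu ih =>
    refine ⟨?_, ?_, ?_⟩
    · rw [B.isValid_append]
      exact ⟨ih.1, hu⟩
    · rw [B.isValid_append]
      exact ⟨ih.2.1, ih.2.2 ▸ hu⟩
    · rw [B.endpt_append, B.endpt_append, ih.2.2]
  | pre e v hv h ih =>
    refine ⟨?_, ?_, ?_⟩
    · rw [B.isValid_append]
      exact ⟨hv, ih.1⟩
    · rw [B.isValid_append]
      exact ⟨hv, ih.2.1⟩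
    · rw [B.endpt_append, B.endpt_append, ih.2.2]

/-- Homotopies lift along coverings. -/
theorem htp_lift {B' B : BrauerData} (hB : B.IsBrauer) {f : B'.E → B.E}
    (hf : IsCovering B' B f) {e : B.E} {l₁ l₂ : List Step} (h : Htp B e l₁ l₂) :
    ∀ x : B'.E, f x = e → Htp B' x l₁ l₂ := by
  induction h with
  | refl e l hv =>
    intro x hx
    exact Htp.refl x l (((cov_valid hf l x).1).mpr (hx ▸ hv))
  | symm _ ih => exact fun x hx => (ih x hx).symm
  | trans _ _ ih1 ih2 => exact fun x hx => (ih1 x hx).trans (ih2 x hx)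
  | gginv e => exact fun x _ => Htp.gginv x
  | ginvg e => exact fun x _ => Htp.ginvg x
  | tautau e he => exact fun x hx => Htp.tautau x ((hf.2.1 x).mpr (hx ▸ he))
  | square e he =>
    intro x hx
    have hxU : x ∈ B'.U := (hf.2.1 x).mpr (hx ▸ he)
    have hd : B.d e = B'.d x := by rw [← hx, hf.2.2.2]
    have hd' : B.d (B.tau e) = B'.d (B'.tau x) := by
      rw [← hx, ← hf.2.2.1 x hxU, hf.2.2.2]
    rw [hd, hd']
    exact Htp.square x hxU
  | @post e' l₁' l₂' u h hu ih =>
    intro x hx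
    have hfacts := htp_facts hB h
    have hv1 : B'.IsValid x l₁' := ((cov_valid hf l₁' x).1).mpr (hx ▸ hfacts.1)
    have hfe : f (B'.endpt x l₁') = B.endpt e' l₁' := by
      rw [(cov_valid hf l₁' x).2 hv1, hx]
    refine Htp.post u (ih x hx) ?_
    exact ((cov_valid hf u (B'.endpt x l₁')).1).mpr (hfe ▸ hu)
  | pre e v hv h ih =>
    intro x hx
    have hv' : B'.IsValid x v := ((cov_valid hf v x).1).mpr (hx ▸ hv)
    refine Htp.pre x v hv' (ih (B'.endpt x v) ?_)
    rw [(cov_valid hf v x).2 hv', hx]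

/-- lifting criterion for coverings of Brauer `G`-sets.
Given coverings `f₁ : E₁ → E`, `f₂ : E₂ → E` with `E₁` connected and
`f₁ e₁ = f₂ e₂`, a covering `φ : E₁ → E₂` with `f₂ ∘ φ = f₁` and `φ e₁ = e₂`
exists iff `f₁*(Π_m(E₁,e₁)) ⊆ f₂*(Π_m(E₂,e₂))` (i.e. every closed walk at `e₁`
maps to a walk homotopic to the image of some closed walk at `e₂`); moreover
such a `φ` is unique. -/
theorem covering_lifting_criterion (B B₁ B₂ : BrauerData)
    (hB : B.IsBrauer) (hB₁ : B₁.IsBrauer) (hB₂ : B₂.IsBrauer)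
    (hconn : B₁.Connected)
    (f₁ : B₁.E → B.E) (hf₁ : IsCovering B₁ B f₁)
    (f₂ : B₂.E → B.E) (hf₂ : IsCovering B₂ B f₂)
    (e₁ : B₁.E) (e₂ : B₂.E) (he : f₁ e₁ = f₂ e₂) :
    ((∃ φ : B₁.E → B₂.E, IsCovering B₁ B₂ φ ∧ (∀ x, f₂ (φ x) = f₁ x) ∧ φ e₁ = e₂) ↔
      (∀ l₁ : List Step, B₁.Closed e₁ l₁ →
        ∃ l₂ : List Step, B₂.Closed e₂ l₂ ∧ Htp B (f₁ e₁) l₁ l₂)) ∧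
    (∀ φ φ' : B₁.E → B₂.E,
      (IsCovering B₁ B₂ φ ∧ (∀ x, f₂ (φ x) = f₁ x) ∧ φ e₁ = e₂) →
      (IsCovering B₁ B₂ φ' ∧ (∀ x, f₂ (φ' x) = f₁ x) ∧ φ' e₁ = e₂) → φ = φ') := by
  classical
  have huniq : ∀ φ φ' : B₁.E → B₂.E,
      (IsCovering B₁ B₂ φ ∧ (∀ x, f₂ (φ x) = f₁ x) ∧ φ e₁ = e₂) →
      (IsCovering B₁ B₂ φ' ∧ (∀ x, f₂ (φ' x) = f₁ x) ∧ φ' e₁ = e₂) → φ = φ' := by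
    rintro φ φ' ⟨hφc, -, hφe⟩ ⟨hφ'c, -, hφ'e⟩
    funext x
    obtain ⟨l, hl1, hl2⟩ := hconn e₁ x
    rw [← hl2, (cov_valid hφc l e₁).2 hl1, (cov_valid hφ'c l e₁).2 hl1, hφe, hφ'e]
  refine ⟨⟨?_, ?_⟩, huniq⟩
  · rintro ⟨φ, hφc, hφcomm, hφe⟩ l₁ ⟨hv, hend⟩
    refine ⟨l₁, ⟨?_, ?_⟩, ?_⟩
    · rw [← hφe]
      exact ((cov_valid hφc l₁ e₁).1).mp hv
    · rw [← hφe, ← (cov_valid hφc l₁ e₁).2 hv, hend]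
    · exact Htp.refl (f₁ e₁) l₁ (((cov_valid hf₁ l₁ e₁).1).mp hv)
  · intro H
    choose w hw1 hw2 using hconn e₁
    -- well-definedness of the lift
    have welldef : ∀ (l l' : List Step), B₁.IsValid e₁ l → B₁.IsValid e₁ l' →
        B₁.endpt e₁ l = B₁.endpt e₁ l' → B₂.endpt e₂ l = B₂.endpt e₂ l' := by
      intro l l' hl hl' hend
      have hinv := inv_walk hB₁ l' e₁ hl'
      have hmval : B₁.IsValid e₁ (l ++ invList l') := by
        rw [B₁.isValid_append, hend]
        exact ⟨hl, hinv.1⟩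
      have hmend : B₁.endpt e₁ (l ++ invList l') = e₁ := by
        rw [B₁.endpt_append, hend]
        exact hinv.2
      obtain ⟨l₂, hl₂c, hhtp⟩ := H (l ++ invList l') ⟨hmval, hmend⟩
      rw [he] at hhtp
      have hlift := htp_lift hB hf₂ hhtp e₂ rfl
      have hfacts := htp_facts hB₂ hlift
      have hme : B₂.endpt e₂ (l ++ invList l') = e₂ := hfacts.2.2.trans hl₂c.2
      have hmv2 := hfacts.1
      rw [B₂.isValid_append] at hmv2
      rw [B₂.endpt_append] at hme
      have h2 := inv_walk hB₂ (invList l') (B₂.endpt e₂ l) hmv2.2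
      rw [hme, invList_invList] at h2
      exact h2.2.symm
    have phi_spec : ∀ (x : B₁.E) (l : List Step), B₁.IsValid e₁ l →
        B₁.endpt e₁ l = x → B₂.endpt e₂ (w x) = B₂.endpt e₂ l := by
      intro x l h1 h2
      exact welldef (w x) l (hw1 x) h1 ((hw2 x).trans h2.symm)
    have hcomm : ∀ x : B₁.E, f₂ (B₂.endpt e₂ (w x)) = f₁ x := by
      intro x
      have hv : B₂.IsValid e₂ (w x) := by
        apply ((cov_valid hf₂ (w x) e₂).1).mpr
        rw [← he]
        exact ((cov_valid hf₁ (w x) e₁).1).mp (hw1 x)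
      rw [(cov_valid hf₂ (w x) e₂).2 hv, ← he, ← (cov_valid hf₁ (w x) e₁).2 (hw1 x), hw2 x]
    refine ⟨fun x => B₂.endpt e₂ (w x), ⟨?_, ?_, ?_, ?_⟩, hcomm, ?_⟩
    · -- equivariance
      intro n x
      show B₂.endpt e₂ (w (B₁.act n x)) = B₂.act n (B₂.endpt e₂ (w x))
      have h1 : B₁.IsValid e₁ (w x ++ gSteps n) := by
        rw [B₁.isValid_append]
        exact ⟨hw1 x, gSteps_valid n _⟩
      have h2 : B₁.endpt e₁ (w x ++ gSteps n) = B₁.act n x := by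
        rw [B₁.endpt_append, hw2 x, endpt_gSteps hB₁]
      rw [phi_spec _ _ h1 h2, B₂.endpt_append, endpt_gSteps hB₂]
    · -- U membership
      intro x
      show x ∈ B₁.U ↔ B₂.endpt e₂ (w x) ∈ B₂.U
      rw [hf₁.2.1 x, ← hcomm x]
      exact (hf₂.2.1 _).symm
    · -- tau compatibility
      intro x hx
      show B₂.endpt e₂ (w (B₁.tau x)) = B₂.tau (B₂.endpt e₂ (w x))
      have hτx : B₁.tau x ∈ B₁.U := hB₁.tau_mem x hx
      have h1 : B₁.IsValid e₁ (w x ++ [Step.tau]) := by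
        rw [B₁.isValid_append, hw2 x]
        exact ⟨hw1 x, fun _ => ⟨hx, hτx⟩, trivial⟩
      have h2 : B₁.endpt e₁ (w x ++ [Step.tau]) = B₁.tau x := by
        rw [B₁.endpt_append, hw2 x]
        rfl
      rw [phi_spec _ _ h1 h2, B₂.endpt_append]
      rfl
    · -- degrees
      intro x
      show B₂.d (B₂.endpt e₂ (w x)) = B₁.d x
      rw [← hf₂.2.2.2, hcomm x, hf₁.2.2.2]
    · -- basepoint
      show B₂.endpt e₂ (w e₁) = e₂
      exact phi_spec e₁ [] trivial rfl

end FB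
end

section
/- Let E = (E, E, τ, d) be a finite connected f_ms-BG with Nakayama automorphism σ such that ⟨σ⟩ is not admissible (i.e. some ⟨σ⟩-orbit meets some edge in both of its half-edges), and let e be a half-edge with τ(e) in the ⟨σ⟩-orbit e^⟨σ⟩ of e. Let r be the smallest positive integer with σ^r(e) = τ(e). Then: (1) e^⟨σ⟩ = {e, σ(e), …, σ^{2r−1}(e)} has exactly 2r elements; (2) the order of σ is 2r; (3) if N is the smallest positive integer with g^N·e ∈ e^⟨σ⟩ and g^N·e = σ^p(e) with 0 ≤ p ≤ 2r−1, then gcd(p, 2r) = 1 (in particular p is odd); (4) the f-degree of each vertex of E/⟨σ⟩ is odd. -/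
namespace FB

section AuxFB

variable {B : BrauerData}

lemma memU (hU : B.U = Set.univ) (x : B.E) : x ∈ B.U := by rw [hU]; trivial

lemma tau_tau (hB : B.IsBrauer) (hU : B.U = Set.univ) (x : B.E) :
    B.tau (B.tau x) = x := hB.tau_invol x (memU hU x)

lemma tau_inj (hB : B.IsBrauer) (hU : B.U = Set.univ) {x y : B.E}
    (h : B.tau x = B.tau y) : x = y := by
  have := congrArg B.tau h
  rwa [tau_tau hB hU, tau_tau hB hU] at this

lemma tau_sigma' (hB : B.IsBrauer) (hU : B.U = Set.univ) (x : B.E) :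
    B.tau (B.sigma x) = B.sigma (B.tau x) := hB.tau_sigma x (memU hU x)

lemma act_act (hB : B.IsBrauer) (m n : ℤ) (x : B.E) :
    B.act m (B.act n x) = B.act (m + n) x := (hB.act_add m n x).symm

lemma act_left_cancel (hB : B.IsBrauer) {n : ℤ} {x y : B.E}
    (h : B.act n x = B.act n y) : x = y := by
  have := congrArg (B.act (-n)) h
  rwa [act_act hB, act_act hB, neg_add_cancel, hB.act_zero, hB.act_zero] at this

lemma sig_it (hB : B.IsBrauer) (k : ℕ) (x : B.E) :
    B.sigma^[k] x = B.act (k * B.d x) x := by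
  induction k with
  | zero => simp [hB.act_zero]
  | succ k ih =>
    rw [Function.iterate_succ_apply', ih, BrauerData.sigma, hB.d_act, act_act hB]
    congr 1
    push_cast
    ring

lemma sig_it_act (hB : B.IsBrauer) (k : ℕ) (n : ℤ) (x : B.E) :
    B.sigma^[k] (B.act n x) = B.act n (B.sigma^[k] x) := by
  rw [sig_it hB, sig_it hB, hB.d_act, act_act hB, act_act hB, add_comm]

lemma tau_sig_it (hB : B.IsBrauer) (hU : B.U = Set.univ) (k : ℕ) (x : B.E) :
    B.tau (B.sigma^[k] x) = B.sigma^[k] (B.tau x) := by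
  induction k generalizing x with
  | zero => rfl
  | succ k ih =>
    rw [Function.iterate_succ_apply, Function.iterate_succ_apply, ih, tau_sigma' hB hU]

/-- Rigidity: a predicate invariant under the steps and true at `e` is true everywhere. -/
lemma rigid (hB : B.IsBrauer) (hconn : B.Connected) (P : B.E → Prop)
    (hg : ∀ x, P x ↔ P (B.act 1 x)) (hτ : ∀ x, P x ↔ P (B.tau x))
    (e : B.E) (he : P e) : ∀ x, P x := by
  have key : ∀ (l : List Step) (y : B.E), P y → P (B.endpt y l) := by
    intro l
    induction l with
    | nil => exact fun y hy => hy
    | cons s l ih =>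
      intro y hy
      show P (B.endpt (B.stepFun s y) l)
      apply ih
      cases s with
      | g => exact (hg y).mp hy
      | ginv =>
        refine (hg (B.act (-1) y)).mpr ?_
        have h1 : B.act 1 (B.act (-1) y) = y := by
          rw [act_act hB]; norm_num [hB.act_zero]
        rw [h1]; exact hy
      | tau => exact (hτ y).mp hy
  intro x
  obtain ⟨l, -, hl⟩ := hconn e x
  rw [← hl]
  exact key l e he

section Main

variable (hB : B.IsBrauer) (hU : B.U = Set.univ) (htau : ∀ x : B.E, B.tau x ≠ x)
  (hconn : B.Connected) {e : B.E} {r : ℕ} (hr : 0 < r)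
  (hre : B.sigma^[r] e = B.tau e)
  (hrmin : ∀ j : ℕ, 0 < j → B.sigma^[j] e = B.tau e → r ≤ j)

include hB hU hre in
lemma fix2r_e : B.sigma^[2 * r] e = e := by
  rw [two_mul, Function.iterate_add_apply, hre, ← tau_sig_it hB hU, hre, tau_tau hB hU]

include hB in
lemma fix_iff_act (k : ℕ) (x : B.E) :
    B.sigma^[k] x = x ↔ B.sigma^[k] (B.act 1 x) = B.act 1 x := by
  constructor
  · intro h; rw [sig_it_act hB, h]
  · intro h; exact act_left_cancel hB (by rwa [sig_it_act hB] at h)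

include hB hU in
lemma fix_iff_tau (k : ℕ) (x : B.E) :
    B.sigma^[k] x = x ↔ B.sigma^[k] (B.tau x) = B.tau x := by
  constructor
  · intro h; rw [← tau_sig_it hB hU, h]
  · intro h; exact tau_inj hB hU (by rwa [← tau_sig_it hB hU] at h)

include hB hU hconn hre in
lemma fix2r : ∀ x, B.sigma^[2 * r] x = x :=
  rigid hB hconn (fun x => B.sigma^[2 * r] x = x)
    (fix_iff_act hB (2 * r)) (fix_iff_tau hB hU (2 * r)) e (fix2r_e hB hU hre)

include hB hU htau hconn hre in
lemma sigr_free : ∀ x, B.sigma^[r] x ≠ x :=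
  rigid hB hconn (fun x => B.sigma^[r] x ≠ x)
    (fun x => not_congr (fix_iff_act hB r x)) (fun x => not_congr (fix_iff_tau hB hU r x))
    e (by show B.sigma^[r] e ≠ e; rw [hre]; exact htau e)

include hB hU htau hre hrmin in
lemma per_e : ∀ j : ℕ, 0 < j → j < 2 * r → B.sigma^[j] e ≠ e := by
  intro j hj hj2 h
  rcases le_or_gt j r with hjr | hjr
  · have h1 : B.sigma^[r - j] e = B.tau e := by
      rw [← hre]
      conv_rhs => rw [← Nat.sub_add_cancel hjr, Function.iterate_add_apply, h]
    rcases Nat.eq_zero_or_pos (r - j) with h0 | h0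
    · rw [h0] at h1
      exact htau e h1.symm
    · have := hrmin (r - j) h0 h1
      omega
  · have h1 : B.tau (B.sigma^[j - r] e) = e := by
      rw [tau_sig_it hB hU, ← hre, ← Function.iterate_add_apply, Nat.sub_add_cancel hjr.le, h]
    have h2 : B.sigma^[j - r] e = B.tau e := by
      have h2 := congrArg B.tau h1
      rwa [tau_tau hB hU] at h2
    have := hrmin (j - r) (by omega) h2
    omega

include hB hU hconn hre in
lemma sig_mod (k : ℕ) (x : B.E) : B.sigma^[k] x = B.sigma^[k % (2 * r)] x := by
  conv_lhs => rw [← Nat.div_add_mod k (2 * r), Function.iterate_add_apply,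
    Function.iterate_mul]
  exact Function.iterate_fixed (fix2r hB hU hconn hre (B.sigma^[k % (2 * r)] x)) _

include hB hU hconn hr hre in
lemma eqv_iff (x y : B.E) :
    Relation.EqvGen (sigmaRel B) x y ↔ ∃ k : ℕ, B.sigma^[k] x = y := by
  constructor
  · intro h
    induction h with
    | rel a b hab => exact ⟨1, hab⟩
    | refl a => exact ⟨0, rfl⟩
    | symm a b _ ih =>
      obtain ⟨k, rfl⟩ := ih
      refine ⟨2 * r * (k + 1) - k, ?_⟩
      rw [← Function.iterate_add_apply, Nat.sub_add_cancel (by nlinarith), Function.iterate_mul]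
      exact Function.iterate_fixed (fix2r hB hU hconn hre a) _
    | trans a b c _ _ ih1 ih2 =>
      obtain ⟨k1, rfl⟩ := ih1
      obtain ⟨k2, rfl⟩ := ih2
      exact ⟨k2 + k1, Function.iterate_add_apply _ k2 k1 a⟩
  · rintro ⟨k, rfl⟩
    induction k with
    | zero => exact Relation.EqvGen.refl x
    | succ k ih =>
      refine Relation.EqvGen.trans _ _ _ ih (Relation.EqvGen.rel _ _ ?_)
      show B.sigma _ = _
      exact (Function.iterate_succ_apply' B.sigma k x).symm

include hB hU hconn hr hre in
lemma eqv_e_iff (x : B.E) :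
    Relation.EqvGen (sigmaRel B) e x ↔ ∃ i < 2 * r, B.sigma^[i] e = x := by
  rw [eqv_iff hB hU hconn hr hre]
  constructor
  · rintro ⟨k, rfl⟩
    exact ⟨k % (2 * r), Nat.mod_lt _ (by omega), (sig_mod hB hU hconn hre k e).symm⟩
  · rintro ⟨i, -, rfl⟩
    exact ⟨i, rfl⟩

include hB in
lemma exists_per (hfin : Finite B.E) (x : B.E) : ∃ m : ℕ, 0 < m ∧ B.act m x = x := by
  obtain ⟨a, b, hne, heq⟩ := Finite.exists_ne_map_eq_of_infinite (fun n : ℕ => B.act n x)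
  have key : ∀ a b : ℕ, a < b → B.act (a : ℤ) x = B.act (b : ℤ) x →
      ∃ m : ℕ, 0 < m ∧ B.act m x = x := by
    intro a b hab h
    have h0 := congrArg (B.act (-(a : ℤ))) h
    rw [act_act hB, act_act hB, neg_add_cancel, hB.act_zero] at h0
    refine ⟨b - a, by omega, ?_⟩
    rw [show ((b - a : ℕ) : ℤ) = -(a : ℤ) + b by push_cast [hab.le]; ring]
    exact h0.symm
  rcases hne.lt_or_gt with hab | hab
  · exact key a b hab heq
  · exact key b a hab heq.symm

include hB in
lemma act_mul_fix {x : B.E} {m₀ : ℕ} (hfix : B.act m₀ x = x) :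
    ∀ q : ℤ, B.act ((m₀ : ℤ) * q) x = x := by
  have hnat : ∀ k : ℕ, B.act ((m₀ : ℤ) * k) x = x := by
    intro k
    induction k with
    | zero => simpa using hB.act_zero x
    | succ k ih =>
      rw [show (m₀ : ℤ) * (k + 1 : ℕ) = (m₀ : ℤ) + (m₀ : ℤ) * k by push_cast; ring,
        hB.act_add, ih, hfix]
  intro q
  rcases le_or_gt 0 q with h | h
  · obtain ⟨k, rfl⟩ := Int.eq_ofNat_of_zero_le h
    exact hnat k
  · have h2 : (m₀ : ℤ) * q + (m₀ : ℤ) * ((-q).toNat) = 0 := by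
      rw [Int.toNat_of_nonneg (by omega)]; ring
    calc B.act ((m₀ : ℤ) * q) x
        = B.act ((m₀ : ℤ) * q) (B.act ((m₀ : ℤ) * ((-q).toNat)) x) := by rw [hnat]
      _ = B.act 0 x := by rw [act_act hB, h2]
      _ = x := hB.act_zero x

include hB in
lemma act_dvd_iff {x : B.E} {m₀ : ℕ} (hm₀ : 0 < m₀) (hfix : B.act m₀ x = x)
    (hmin : ∀ j : ℕ, 0 < j → B.act j x = x → m₀ ≤ j) :
    ∀ n : ℤ, B.act n x = x ↔ (m₀ : ℤ) ∣ n := by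
  intro n
  constructor
  · intro h
    have h1 : B.act (n % (m₀ : ℤ)) x = x := by
      rw [show n % (m₀ : ℤ) = (m₀ : ℤ) * (-(n / m₀)) + n by rw [Int.emod_def]; ring,
        hB.act_add, h]
      exact act_mul_fix hB hfix _
    set s := (n % (m₀ : ℤ)).toNat with hs_def
    have hs : ((s : ℤ)) = n % (m₀ : ℤ) :=
      Int.toNat_of_nonneg (Int.emod_nonneg n (by exact_mod_cast hm₀.ne'))
    have hlt : n % (m₀ : ℤ) < m₀ := Int.emod_lt_of_pos n (by exact_mod_cast hm₀)
    rcases Nat.eq_zero_or_pos s with h0 | h0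
    · exact Int.dvd_of_emod_eq_zero (by omega)
    · have := hmin s h0 (by rw [← hs] at h1; exact_mod_cast h1)
      omega
  · rintro ⟨q, rfl⟩
    exact act_mul_fix hB hfix q

include hB hU hconn hre in
lemma orbit_dvd_iff (hr : 0 < r) (x : B.E) {m₀ : ℕ} (hm₀ : 0 < m₀) (hfix : B.act m₀ x = x)
    (hmin : ∀ j : ℕ, 0 < j → B.act j x = x → m₀ ≤ j) :
    ∀ n : ℤ, Relation.EqvGen (sigmaRel B) x (B.act n x) ↔
      ((Nat.gcd (B.d x) m₀ : ℤ)) ∣ n := by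
  intro n
  set g : ℕ := Nat.gcd (B.d x) m₀ with hg_def
  have hdvd := act_dvd_iff hB hm₀ hfix hmin
  have h2rd : (m₀ : ℤ) ∣ ((2 * r : ℕ) : ℤ) * (B.d x : ℤ) := by
    rw [← hdvd]
    have h5 := fix2r hB hU hconn hre x
    rw [sig_it hB] at h5
    exact_mod_cast h5
  rw [eqv_iff hB hU hconn hr hre]
  constructor
  · rintro ⟨k, hk⟩
    rw [sig_it hB] at hk
    have h0 := congrArg (B.act (-((k : ℤ) * B.d x))) hk
    rw [act_act hB, act_act hB, neg_add_cancel, hB.act_zero] at h0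
    have h1 : (m₀ : ℤ) ∣ -((k : ℤ) * B.d x) + n := (hdvd _).mp h0.symm
    have hgd : (g : ℤ) ∣ (B.d x : ℤ) := Int.natCast_dvd_natCast.mpr (Nat.gcd_dvd_left _ _)
    have hgm : (g : ℤ) ∣ (m₀ : ℤ) := Int.natCast_dvd_natCast.mpr (Nat.gcd_dvd_right _ _)
    have h2 : (g : ℤ) ∣ -((k : ℤ) * B.d x) + n := hgm.trans h1
    have h3 : (g : ℤ) ∣ (k : ℤ) * B.d x := Dvd.dvd.mul_left hgd k
    have h4 := dvd_add h2 h3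
    ring_nf at h4
    exact h4
  · rintro ⟨t, ht⟩
    have hbez : (g : ℤ) = (B.d x : ℤ) * Int.gcdA (B.d x) m₀ + (m₀ : ℤ) * Int.gcdB (B.d x) m₀ := by
      rw [hg_def, ← Int.gcd_natCast_natCast]
      exact Int.gcd_eq_gcd_ab _ _
    have h2rpos : (0 : ℤ) < ((2 * r : ℕ) : ℤ) := by exact_mod_cast (by omega : 0 < 2 * r)
    set k : ℕ := ((t * Int.gcdA (B.d x) m₀) % ((2 * r : ℕ) : ℤ)).toNat with hk_def
    have hkz : (k : ℤ) = (t * Int.gcdA (B.d x) m₀) % ((2 * r : ℕ) : ℤ) :=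
      Int.toNat_of_nonneg (Int.emod_nonneg _ (by omega))
    have h1 : n - (t * Int.gcdA (B.d x) m₀) * B.d x = (m₀ : ℤ) * (t * Int.gcdB (B.d x) m₀) := by
      rw [ht]
      linear_combination t * hbez
    have h2 : (t * Int.gcdA (B.d x) m₀) - (k : ℤ) =
        ((2 * r : ℕ) : ℤ) * ((t * Int.gcdA (B.d x) m₀) / ((2 * r : ℕ) : ℤ)) := by
      rw [hkz, Int.emod_def]
      ring
    obtain ⟨c, hc⟩ := h2rd
    have h3 : (m₀ : ℤ) ∣ n - (k : ℤ) * B.d x := by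
      refine ⟨t * Int.gcdB (B.d x) m₀ + (t * Int.gcdA (B.d x) m₀) / ((2 * r : ℕ) : ℤ) * c, ?_⟩
      have e1 : n - (k : ℤ) * B.d x = (n - (t * Int.gcdA (B.d x) m₀) * B.d x) +
          ((t * Int.gcdA (B.d x) m₀) - (k : ℤ)) * B.d x := by ring
      rw [e1, h1, h2]
      linear_combination ((t * Int.gcdA (B.d x) m₀) / ((2 * r : ℕ) : ℤ)) * hc
    refine ⟨k, ?_⟩
    rw [sig_it hB]
    obtain ⟨c₂, hc₂⟩ := h3
    have e2 : B.act n x = B.act ((k : ℤ) * B.d x) (B.act ((m₀ : ℤ) * c₂) x) := by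
      rw [act_act hB]
      congr 1
      linarith [hc₂]
    rw [e2, act_mul_fix hB hfix c₂]

include hB hU htau hconn hre in
lemma vertex_pkg (hr : 0 < r) (hfin : Finite B.E) (x : B.E) :
    ∃ m a : ℕ, 0 < m ∧ B.d x = m * a ∧ Odd a ∧
      (∀ n : ℤ, Relation.EqvGen (sigmaRel B) x (B.act n x) ↔ (m : ℤ) ∣ n) := by
  classical
  have hex : ∃ m : ℕ, 0 < m ∧ B.act m x = x := exists_per hB hfin x
  set m₀ := Nat.find hex with hm₀_def
  obtain ⟨hm₀pos, hm₀fix⟩ : 0 < m₀ ∧ B.act m₀ x = x := Nat.find_spec hex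
  have hmin : ∀ j : ℕ, 0 < j → B.act j x = x → m₀ ≤ j := fun j h1 h2 => Nat.find_le ⟨h1, h2⟩
  set g := Nat.gcd (B.d x) m₀ with hg_def
  have hgpos : 0 < g := Nat.gcd_pos_of_pos_left _ (hB.dpos x)
  have hdvd_d : g ∣ B.d x := Nat.gcd_dvd_left _ _
  have hdvd_m : g ∣ m₀ := Nat.gcd_dvd_right _ _
  set a := B.d x / g with ha_def
  set b := m₀ / g with hb_def
  have hda : B.d x = g * a := (Nat.mul_div_cancel' hdvd_d).symm
  have hmb : m₀ = g * b := (Nat.mul_div_cancel' hdvd_m).symm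
  have cop : Nat.Coprime a b := Nat.coprime_div_gcd_div_gcd hgpos
  have hbpos : 0 < b := Nat.div_pos (Nat.le_of_dvd hm₀pos hdvd_m) hgpos
  have h2rd : m₀ ∣ 2 * r * B.d x := by
    have h5 := fix2r hB hU hconn hre x
    rw [sig_it hB] at h5
    have h6 := (act_dvd_iff hB hm₀pos hm₀fix hmin _).mp h5
    exact_mod_cast h6
  have hb2r : b ∣ 2 * r := by
    refine (Nat.Coprime.dvd_of_dvd_mul_right cop.symm) ?_
    obtain ⟨c, hc⟩ := h2rd
    refine ⟨c, ?_⟩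
    have h7 : g * (2 * r * a) = g * (b * c) := by
      rw [show g * (2 * r * a) = 2 * r * (g * a) by ring, ← hda, hc, hmb]
      ring
    exact Nat.eq_of_mul_eq_mul_left hgpos h7
  have hbr : ¬ b ∣ r := by
    intro hdvdr
    obtain ⟨c, hc⟩ := hdvdr
    have h8 : m₀ ∣ r * B.d x := ⟨c * a, by rw [hmb, hda, hc]; ring⟩
    have h9 : B.act ((r * B.d x : ℕ) : ℤ) x = x :=
      (act_dvd_iff hB hm₀pos hm₀fix hmin _).mpr (Int.natCast_dvd_natCast.mpr h8)
    apply sigr_free hB hU htau hconn hre x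
    rw [sig_it hB]
    exact_mod_cast h9
  have hb_even : 2 ∣ b := by
    by_contra h2b
    have hcop2 : Nat.Coprime b 2 := by
      rcases (Nat.dvd_prime Nat.prime_two).mp (Nat.gcd_dvd_right b 2) with h | h
      · exact h
      · exact absurd (h ▸ Nat.gcd_dvd_left b 2) h2b
    exact hbr (hcop2.dvd_of_dvd_mul_left hb2r)
  have ha_odd : Odd a := by
    rcases Nat.even_or_odd a with he | ho
    · exfalso
      have h10 : 2 ∣ Nat.gcd a b := Nat.dvd_gcd he.two_dvd hb_even
      have h11 : Nat.gcd a b = 1 := cop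
      rw [h11] at h10
      omega
    · exact ho
  exact ⟨g, a, hgpos, hda, ha_odd, orbit_dvd_iff hB hU hconn hre hr x hm₀pos hm₀fix hmin⟩

include hB hU htau hconn hre hrmin in
lemma part3 (hr : 0 < r) (hfin : Finite B.E) (N : ℕ) (hN : 0 < N)
    (hNe : Relation.EqvGen (sigmaRel B) e (B.act N e))
    (hNmin : ∀ j : ℕ, 0 < j → Relation.EqvGen (sigmaRel B) e (B.act j e) → N ≤ j)
    (p : ℕ) (hp : p < 2 * r) (hpe : B.sigma^[p] e = B.act N e) :
    Nat.gcd p (2 * r) = 1 ∧ Odd p := by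
  classical
  have hex : ∃ m : ℕ, 0 < m ∧ B.act m e = e := exists_per hB hfin e
  set m₀ := Nat.find hex with hm₀_def
  obtain ⟨hm₀pos, hm₀fix⟩ : 0 < m₀ ∧ B.act m₀ e = e := Nat.find_spec hex
  have hmin : ∀ j : ℕ, 0 < j → B.act j e = e → m₀ ≤ j := fun j h1 h2 => Nat.find_le ⟨h1, h2⟩
  set g := Nat.gcd (B.d e) m₀ with hg_def
  have hgpos : 0 < g := Nat.gcd_pos_of_pos_left _ (hB.dpos e)
  have hdvd_d : g ∣ B.d e := Nat.gcd_dvd_left _ _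
  have hdvd_m : g ∣ m₀ := Nat.gcd_dvd_right _ _
  set a := B.d e / g with ha_def
  set b := m₀ / g with hb_def
  have hda : B.d e = g * a := (Nat.mul_div_cancel' hdvd_d).symm
  have hmb : m₀ = g * b := (Nat.mul_div_cancel' hdvd_m).symm
  have cop : Nat.Coprime a b := Nat.coprime_div_gcd_div_gcd hgpos
  have hbpos : 0 < b := Nat.div_pos (Nat.le_of_dvd hm₀pos hdvd_m) hgpos
  have hiff := orbit_dvd_iff hB hU hconn hre hr e hm₀pos hm₀fix hmin
  -- N = g
  have hgN : g ∣ N := by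
    have := (hiff N).mp hNe
    exact_mod_cast this
  have hNle : N ≤ g := hNmin g hgpos ((hiff g).mpr (by exact_mod_cast dvd_refl (g : ℤ)))
  have hNg : N = g := le_antisymm hNle (Nat.le_of_dvd hN hgN)
  -- m₀ ∣ 2r * d e, hence b ∣ 2r
  have h2rd : m₀ ∣ 2 * r * B.d e := by
    have h5 := fix2r hB hU hconn hre e
    rw [sig_it hB] at h5
    have h6 := (act_dvd_iff hB hm₀pos hm₀fix hmin _).mp h5
    exact_mod_cast h6
  have hb2r : b ∣ 2 * r := by
    refine (Nat.Coprime.dvd_of_dvd_mul_right cop.symm) ?_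
    obtain ⟨c, hc⟩ := h2rd
    refine ⟨c, ?_⟩
    have h7 : g * (2 * r * a) = g * (b * c) := by
      rw [show g * (2 * r * a) = 2 * r * (g * a) by ring, ← hda, hc, hmb]
      ring
    exact Nat.eq_of_mul_eq_mul_left hgpos h7
  -- 2r ≤ b, hence b = 2r
  have hsigb : B.sigma^[b] e = e := by
    rw [sig_it hB]
    refine (act_dvd_iff hB hm₀pos hm₀fix hmin _).mpr ?_
    have h8 : m₀ ∣ b * B.d e := ⟨a, by rw [hmb, hda]; ring⟩
    exact_mod_cast Int.natCast_dvd_natCast.mpr h8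
  have hble : 2 * r ≤ b := by
    by_contra hlt
    exact per_e hB hU htau hre hrmin b hbpos (by omega) hsigb
  have hbeq : b = 2 * r := le_antisymm (Nat.le_of_dvd (by omega) hb2r) hble
  -- m₀ ∣ p * d e - g
  have hmpd : (m₀ : ℤ) ∣ (p : ℤ) * B.d e - g := by
    rw [sig_it hB] at hpe
    have h0 := congrArg (B.act (-((N : ℕ) : ℤ))) hpe
    rw [act_act hB, act_act hB, neg_add_cancel, hB.act_zero] at h0
    have h9 := (act_dvd_iff hB hm₀pos hm₀fix hmin _).mp h0
    have h10 : -((N : ℕ) : ℤ) + (p : ℤ) * B.d e = (p : ℤ) * B.d e - g := by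
      rw [hNg]; ring
    rwa [h10] at h9
  -- b ∣ p * a - 1
  have hbpa : ((2 * r : ℕ) : ℤ) ∣ (p : ℤ) * a - 1 := by
    rw [← hbeq]
    obtain ⟨c, hc⟩ := hmpd
    refine ⟨c, ?_⟩
    have hgz : (g : ℤ) ≠ 0 := by exact_mod_cast hgpos.ne'
    have h11 : (g : ℤ) * ((p : ℤ) * a - 1) = (g : ℤ) * ((b : ℤ) * c) := by
      have h12 : ((B.d e : ℕ) : ℤ) = (g : ℤ) * a := by exact_mod_cast hda
      have h13 : ((m₀ : ℕ) : ℤ) = (g : ℤ) * b := by exact_mod_cast hmb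
      rw [show (g:ℤ) * ((p:ℤ)*a - 1) = (p:ℤ) * ((g:ℤ)*a) - g by ring, ← h12,
        show (g:ℤ) * ((b:ℤ)*c) = ((g:ℤ)*b) * c by ring, ← h13, ← hc]
    exact mul_left_cancel₀ hgz h11
  constructor
  · have hc1 : ((Nat.gcd p (2*r) : ℕ) : ℤ) ∣ (p : ℤ) * a :=
      Dvd.dvd.mul_right (Int.natCast_dvd_natCast.mpr (Nat.gcd_dvd_left _ _)) _
    have hc2 : ((Nat.gcd p (2*r) : ℕ) : ℤ) ∣ (p : ℤ) * a - 1 :=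
      (Int.natCast_dvd_natCast.mpr (Nat.gcd_dvd_right _ _)).trans hbpa
    have hc3 : ((Nat.gcd p (2*r) : ℕ) : ℤ) ∣ 1 := by
      have h4 := dvd_sub hc1 hc2
      rw [sub_sub_cancel] at h4
      exact h4
    have hc4 : Nat.gcd p (2*r) ∣ 1 := by exact_mod_cast hc3
    exact Nat.dvd_one.mp hc4
  · rcases Nat.even_or_odd p with he | ho
    · exfalso
      have h14 : 2 ∣ Nat.gcd p (2*r) := Nat.dvd_gcd he.two_dvd ⟨r, rfl⟩
      have hc1 : ((Nat.gcd p (2*r) : ℕ) : ℤ) ∣ (p : ℤ) * a :=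
        Dvd.dvd.mul_right (Int.natCast_dvd_natCast.mpr (Nat.gcd_dvd_left _ _)) _
      have hc2 : ((Nat.gcd p (2*r) : ℕ) : ℤ) ∣ (p : ℤ) * a - 1 :=
        (Int.natCast_dvd_natCast.mpr (Nat.gcd_dvd_right _ _)).trans hbpa
      have hc3 : ((Nat.gcd p (2*r) : ℕ) : ℤ) ∣ 1 := by
        have h4 := dvd_sub hc1 hc2
        rw [sub_sub_cancel] at h4
        exact h4
      have hc4 : Nat.gcd p (2*r) ∣ 1 := by exact_mod_cast hc3
      have := Nat.dvd_one.mp hc4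
      omega
    · exact ho

end Main

end AuxFB

/-- Let `E = (E,E,τ,d)` be a finite connected `f_ms`-BG with
Nakayama automorphism `σ` such that `⟨σ⟩` is not admissible, witnessed by a half-edge
`e` with `τ e ∈ e^⟨σ⟩`, and let `r` be the smallest positive integer with
`σ^r e = τ e`.  Then:
(1) `e^⟨σ⟩ = {e, σ e, …, σ^(2r-1) e}` has exactly `2r` elements;
(2) the order of `σ` is `2r`;
(3) if `N` is the smallest positive integer with `g^N·e ∈ e^⟨σ⟩` and
    `g^N·e = σ^p e` with `0 ≤ p ≤ 2r-1`, then `gcd(p, 2r) = 1` (in particular `p` is odd);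
(4) every vertex of `E/⟨σ⟩` has odd f-degree. -/
theorem non_admissible_odd_degree (B : BrauerData) (hB : B.IsBrauer)
    (hU : B.U = Set.univ) (htau : ∀ e : B.E, B.tau e ≠ e)
    (hfin : Finite B.E) (hconn : B.Connected)
    (e : B.E) (r : ℕ) (hr : 0 < r) (hre : B.sigma^[r] e = B.tau e)
    (hrmin : ∀ j : ℕ, 0 < j → B.sigma^[j] e = B.tau e → r ≤ j) :
    (Nat.card {x : B.E // Relation.EqvGen (sigmaRel B) e x} = 2 * r ∧
      (∀ x : B.E, Relation.EqvGen (sigmaRel B) e x ↔ ∃ i < 2 * r, B.sigma^[i] e = x)) ∧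
    IsOrderOf B (2 * r) ∧
    (∀ N : ℕ, 0 < N → Relation.EqvGen (sigmaRel B) e (B.act N e) →
      (∀ j : ℕ, 0 < j → Relation.EqvGen (sigmaRel B) e (B.act j e) → N ≤ j) →
      ∀ p : ℕ, p < 2 * r → B.sigma^[p] e = B.act N e →
        Nat.gcd p (2 * r) = 1 ∧ Odd p) ∧
    (∀ c : (sigmaQuot B hB hU).E, ∃ m fdeg : ℕ, 0 < m ∧
      (sigmaQuot B hB hU).act m c = c ∧
      (∀ j : ℕ, 0 < j → (sigmaQuot B hB hU).act j c = c → m ≤ j) ∧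
      (sigmaQuot B hB hU).d c = m * fdeg ∧ Odd fdeg) := by
  have hchar := eqv_e_iff hB hU hconn hr hre
  refine ⟨⟨?_, hchar⟩, ⟨by omega, fix2r hB hU hconn hre, ?_⟩, ?_, ?_⟩
  · -- cardinality
    have hinj : ∀ i j : ℕ, i < j → j < 2 * r → B.sigma^[i] e ≠ B.sigma^[j] e := by
      intro i j hij hj h
      have h1 : B.sigma^[2 * r - j + i] e = e := by
        rw [Function.iterate_add_apply, h, ← Function.iterate_add_apply,
          Nat.sub_add_cancel hj.le]
        exact fix2r_e hB hU hre
      exact per_e hB hU htau hre hrmin _ (by omega) (by omega) h1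
    have hbij : Function.Bijective
        (fun i : Fin (2 * r) => (⟨B.sigma^[i.1] e, (hchar _).mpr ⟨i.1, i.2, rfl⟩⟩ :
          {x : B.E // Relation.EqvGen (sigmaRel B) e x})) := by
      constructor
      · intro i j h
        have h2 : B.sigma^[i.1] e = B.sigma^[j.1] e := congrArg Subtype.val h
        rcases lt_trichotomy i.1 j.1 with h3 | h3 | h3
        · exact absurd h2 (hinj _ _ h3 j.2)
        · exact Fin.ext h3
        · exact absurd h2.symm (hinj _ _ h3 i.2)
      · rintro ⟨x, hx⟩
        obtain ⟨i, hi, rfl⟩ := (hchar x).mp hx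
        exact ⟨⟨i, hi⟩, rfl⟩
    exact Nat.card_eq_of_equiv_fin (Equiv.ofBijective _ hbij).symm
  · -- order minimality
    intro j hj hfix
    by_contra hlt
    push_neg at hlt
    exact per_e hB hU htau hre hrmin j hj hlt (hfix e)
  · -- part 3
    intro N hN hNe hNmin p hp hpe
    exact part3 hB hU htau hconn hre hrmin hr hfin N hN hNe hNmin p hp hpe
  · -- part 4
    intro c
    induction c using Quot.ind with
    | _ x =>
      obtain ⟨m, a, hm, hda, hodd, hiff⟩ := vertex_pkg hB hU htau hconn hre hr hfin x
      refine ⟨m, a, hm, ?_, ?_, hda, hodd⟩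
      · show Quot.mk (sigmaRel B) (B.act (m : ℤ) x) = Quot.mk (sigmaRel B) x
        rw [Quot.eq]
        exact ((hiff m).mpr (by exact_mod_cast dvd_refl (m : ℤ))).symm
      · intro j hj hact
        have h1 : Quot.mk (sigmaRel B) (B.act (j : ℤ) x) = Quot.mk (sigmaRel B) x := hact
        rw [Quot.eq] at h1
        have h2 := (hiff j).mp h1.symm
        have h3 : m ∣ j := by exact_mod_cast h2
        exact Nat.le_of_dvd hj h3

end FB
end
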